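/- Let G be a group acting on a set X and let K be a normal subgroup of G whose restricted action on X is free. Then for every x ∈ X, the quotient homomorphism π : G → G/K restricts to an isomorphism from the stabilizer Stab_G(x) onto the stabilizer Stab_{G/K}(K•x) of the orbit K•x for the induced G/K-action on X/K; that is, π(Stab_G(x)) = Stab_{G/K}(K•x) and π is injective on Stab_G(x). -/
import Mathlib


/-- An equivariant map `(φ, f) : G⋉X → H⋉Y` between translation groupoids is *fully
faithful* if for all `x, x' ∈ X` and `h ∈ H` with `h • f x = f x'` there is a unique
`g ∈ G` with `φ g = h` and `g • x = x'`. -/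
def IsFullyFaithful {G H : Type*} [Group G] [Group H] {X Y : Type*}
    [MulAction G X] [MulAction H Y] (φ : G →* H) (f : X → Y) : Prop :=
  ∀ (x x' : X) (h : H), h • f x = f x' → ∃! g : G, φ g = h ∧ g • x = x'

/-- An equivariant map with underlying map `f : X → Y` into an `H`-set `Y` is
*essentially surjective* if every `y ∈ Y` is of the form `h • f x`. -/
def IsEssSurj {H : Type*} [Group H] {X Y : Type*} [MulAction H Y] (f : X → Y) : Prop :=
  ∀ y : Y, ∃ (x : X) (h : H), h • f x = y

variable {G : Type*} [Group G] {X : Type*} [MulAction G X]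

/-- The set `X/K` of `K`-orbits of the `G`-set `X`, for a subgroup `K ≤ G`. -/
def OrbitQuot (K : Subgroup G) (X : Type*) [MulAction G X] : Type _ :=
  Quotient (MulAction.orbitRel K X)

/-- The orbit map `X → X/K`. -/
def OrbitQuot.mk (K : Subgroup G) (x : X) : OrbitQuot K X :=
  Quotient.mk (MulAction.orbitRel K X) x

/-- For `K ⊴ G` normal, the induced action of `G/K` on `X/K`: `(gK) • (K•x) = K•(g•x)`. -/
instance OrbitQuot.instMulAction (K : Subgroup G) [K.Normal] :
    MulAction (G ⧸ K) (OrbitQuot K X) where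
  smul g x := Quotient.liftOn₂ g x (fun g x => OrbitQuot.mk K (g • x)) <| by
    intro g₁ x₁ g₂ x₂ hg hx
    have hg' : g₁⁻¹ * g₂ ∈ K := QuotientGroup.leftRel_apply.mp hg
    have hx' : x₁ ∈ MulAction.orbit K x₂ := hx
    obtain ⟨k, hk⟩ := hx'
    apply Quotient.sound
    show g₁ • x₁ ∈ MulAction.orbit K (g₂ • x₂)
    refine ⟨⟨g₁ * ((k : G) * (g₁⁻¹ * g₂)⁻¹) * g₁⁻¹,
      Subgroup.Normal.conj_mem inferInstance _ (K.mul_mem k.2 (K.inv_mem hg')) g₁⟩, ?_⟩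
    show (g₁ * ((k : G) * (g₁⁻¹ * g₂)⁻¹) * g₁⁻¹) • g₂ • x₂ = g₁ • x₁
    have hk' : (k : G) • x₂ = x₁ := hk
    rw [← hk', ← mul_smul, ← mul_smul]
    congr 1
    group
  one_smul := by
    rintro ⟨x⟩
    exact congrArg (OrbitQuot.mk K) (one_smul G x)
  mul_smul := by
    rintro ⟨a⟩ ⟨b⟩ ⟨x⟩
    exact congrArg (OrbitQuot.mk K) (mul_smul a b x)

/-- If the normal subgroup `K ⊴ G` acts freely on `X`, then for every `x ∈ X` the
quotient homomorphism `π : G → G/K` restricts to an isomorphism from the stabilizer of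
`x` in `G` onto the stabilizer of the orbit `K•x` for the induced `G/K`-action on
`X/K`: the image of `Stab_G(x)` is `Stab_{G/K}(K•x)` and `π` is injective on
`Stab_G(x)`. -/
theorem stmt_15 (K : Subgroup G) [K.Normal]
    (hfree : ∀ (k : K) (x : X), (k : G) • x = x → k = 1) (x : X) :
    (MulAction.stabilizer G x).map (QuotientGroup.mk' K)
        = MulAction.stabilizer (G ⧸ K) (OrbitQuot.mk K x)
    ∧ Set.InjOn (QuotientGroup.mk' K) (MulAction.stabilizer G x : Set G) := by
  have hsmul : ∀ (g : G) (y : X),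
      (QuotientGroup.mk' K g) • (OrbitQuot.mk K y) = OrbitQuot.mk K (g • y) :=
    fun g y => rfl
  constructor
  · ext q
    constructor
    · rintro ⟨g, hg, rfl⟩
      show (QuotientGroup.mk' K g) • (OrbitQuot.mk K x) = OrbitQuot.mk K x
      rw [hsmul, hg]
    · intro hq
      obtain ⟨g, rfl⟩ := QuotientGroup.mk'_surjective K q
      have : (QuotientGroup.mk' K g) • (OrbitQuot.mk K x) = OrbitQuot.mk K x := hq
      rw [hsmul] at this
      have horb : g • x ∈ MulAction.orbit K x := Quotient.exact this
      obtain ⟨k, hk⟩ := horb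
      refine ⟨(k : G)⁻¹ * g, ?_, ?_⟩
      · show ((k : G)⁻¹ * g) • x = x
        have hk' : (k : G) • x = g • x := hk
        rw [mul_smul, ← hk', inv_smul_smul]
      · simp [QuotientGroup.eq, mul_assoc]
  · intro g hg g' hg' h
    have hK : g⁻¹ * g' ∈ K := QuotientGroup.eq.mp h
    have : ((⟨g⁻¹ * g', hK⟩ : K) : G) • x = x := by
      have hg1 : g • x = x := hg
      have hg2 : g' • x = x := hg'
      show (g⁻¹ * g') • x = x
      rw [mul_smul, hg2, inv_smul_eq_iff]
      exact hg1.symm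
    have := hfree _ _ this
    have h1 : g⁻¹ * g' = 1 := congrArg Subtype.val this
    exact inv_mul_eq_one.mp h1
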